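/- Let μ be a finite Borel measure on an interval (p,q) decomposed as μ = λ + Σ_i μ_{x_i} + ν where λ + ν is non-atomic and μ_{x_i} are atoms with Σ_{i>M} μ_{x_i}((p,q)) < K₀/2, and suppose (λ+ν)((u,v)) < K₀/2 for every interval (u,v) of length < L avoiding the points x_1,…,x_M. If μ assigns to every open subinterval either measure 0 or measure ≥ K₀, then μ((p,q) \ {x_1,…,x_M}) = 0. -/

import Mathlib

/-! Around each point of `(p,q)` other than `x₁, …, x_M` there is an interval of length `< L`
avoiding those points; on it the non-atomic part and the tail atoms each carry less than `K₀/2`,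
so the gap forces its measure to vanish. A set that is locally null is null (Lindelöf). -/

open MeasureTheory ENNReal Set Filter Topology

lemma exists_Ioo_sub_lt_subset_of_mem_nhds {y L : ℝ} {s : Set ℝ} (hs : s ∈ 𝓝 y) (hL : 0 < L) :
    ∃ u v, u < y ∧ y < v ∧ v - u < L ∧ Ioo u v ⊆ s := by
  obtain ⟨l, r, ⟨hly, hyr⟩, hlr⟩ := mem_nhds_iff_exists_Ioo_subset.1 hs
  refine ⟨max l (y - L / 3), min r (y + L / 3), max_lt hly (by linarith),
    lt_min hyr (by linarith), ?_, (Ioo_subset_Ioo (le_max_left _ _) (min_le_left _ _)).trans hlr⟩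
  linarith [le_max_right l (y - L / 3), min_le_right r (y + L / 3)]

lemma sum_dirac_apply_le_tail {α : Type*} [MeasurableSpace α] (x : ℕ → α) (c : ℕ → ℝ≥0∞)
    (M : ℕ) {s t : Set α} (hs : MeasurableSet s) (hst : s ⊆ t) (havoid : ∀ i ≤ M, x i ∉ s) :
    Measure.sum (fun i => c i • Measure.dirac (x i)) s
      ≤ ∑' i, (if M < i then c i * Measure.dirac (x i) t else 0) := by
  rw [Measure.sum_apply _ hs]
  refine ENNReal.tsum_le_tsum fun i => ?_
  simp only [Measure.smul_apply, smul_eq_mul]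
  split_ifs with hi
  · exact mul_le_mul_right (measure_mono hst) _
  · rw [Measure.dirac_apply' _ hs, indicator_of_notMem (havoid i (not_lt.1 hi)), mul_zero]

theorem polygonal_from_curvature_gap_general (p q : ℝ)
    (μ lam ν A : Measure ℝ)
    (x : ℕ → ℝ) (cwt : ℕ → ℝ≥0∞) (M : ℕ)
    (hA : A = Measure.sum (fun i : ℕ => cwt i • Measure.dirac (x i)))
    (hμ : μ = lam + ν + A)
    (K₀ : ℝ≥0∞)
    (htail : ∑' i : ℕ, (if M < i then cwt i * Measure.dirac (x i) (Set.Ioo p q) else 0)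
      < K₀ / 2)
    (L : ℝ) (hL : 0 < L)
    (hsmall : ∀ u v : ℝ, u < v → v - u < L → (∀ i ≤ M, x i ∉ Set.Ioo u v) →
      (lam + ν) (Set.Ioo u v) < K₀ / 2)
    (hgap : ∀ u v : ℝ, u < v → Set.Ioo u v ⊆ Set.Ioo p q →
      μ (Set.Ioo u v) = 0 ∨ K₀ ≤ μ (Set.Ioo u v)) :
    μ (Set.Ioo p q \ x '' {i : ℕ | i ≤ M}) = 0 := by
  refine measure_null_of_locally_null _ fun y hy => ?_
  have hclosed : IsClosed (x '' {i | i ≤ M}) := ((finite_Iic M).image x).isClosed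
  obtain ⟨u, v, huy, hyv, hlen, hsub⟩ :=
    exists_Ioo_sub_lt_subset_of_mem_nhds ((isOpen_Ioo.sdiff hclosed).mem_nhds hy) hL
  have hpq : Ioo u v ⊆ Ioo p q := hsub.trans sdiff_subset
  have havoid : ∀ i ≤ M, x i ∉ Ioo u v := fun i hi hxi => (hsub hxi).2 ⟨i, hi, rfl⟩
  have hlt : μ (Ioo u v) < K₀ :=
    calc μ (Ioo u v) = (lam + ν) (Ioo u v) + A (Ioo u v) := by rw [hμ, Measure.add_apply]
      _ < K₀ / 2 + K₀ / 2 := by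
        refine ENNReal.add_lt_add (hsmall u v (huy.trans hyv) hlen havoid) ?_
        rw [hA]
        exact (sum_dirac_apply_le_tail x cwt M measurableSet_Ioo hpq havoid).trans_lt htail
      _ = K₀ := ENNReal.add_halves K₀
  exact ⟨Ioo u v, mem_nhdsWithin_of_mem_nhds (Ioo_mem_nhds huy hyv),
    (hgap u v (huy.trans hyv) hpq).resolve_right hlt.not_ge⟩

/-- Let the curvature measure `μ = λ + ν + Σᵢ cᵢ·δ_{xᵢ}` on `(p,q)` have non-atomic
part `λ + ν`, tail atoms of total mass `< K₀/2`, and suppose every interval of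
length `< L` avoiding `x₁,…,x_M` has `(λ+ν)`-measure `< K₀/2`. If every open
subinterval of `(p,q)` has `μ`-measure `0` or `≥ K₀`, then
`μ((p,q) \ {x₁,…,x_M}) = 0` (the arc is polygonal with corners at the `xᵢ`). -/
theorem polygonal_from_curvature_gap (p q : ℝ) (hpq : p < q)
    (μ lam ν A : Measure ℝ) [IsFiniteMeasure μ]
    (x : ℕ → ℝ) (cwt : ℕ → ℝ≥0∞) (M : ℕ)
    (hA : A = Measure.sum (fun i : ℕ => cwt i • Measure.dirac (x i)))
    (hμ : μ = lam + ν + A)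
    (hna : ∀ r : ℝ, (lam + ν) {r} = 0)
    (K₀ : ℝ≥0∞) (hK₀ : 0 < K₀)
    (htail : ∑' i : ℕ, (if M < i then cwt i * Measure.dirac (x i) (Set.Ioo p q) else 0)
      < K₀ / 2)
    (L : ℝ) (hL : 0 < L)
    (hsmall : ∀ u v : ℝ, u < v → v - u < L → (∀ i ≤ M, x i ∉ Set.Ioo u v) →
      (lam + ν) (Set.Ioo u v) < K₀ / 2)
    (hgap : ∀ u v : ℝ, u < v → Set.Ioo u v ⊆ Set.Ioo p q →
      μ (Set.Ioo u v) = 0 ∨ K₀ ≤ μ (Set.Ioo u v)) :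
    μ (Set.Ioo p q \ x '' {i : ℕ | i ≤ M}) = 0 :=
  polygonal_from_curvature_gap_general p q μ lam ν A x cwt M hA hμ K₀ htail L hL hsmall hgap
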